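/- (Lemma 2, part (prop_6.3).) Fix ε_ν ∈ (0,1), and suppose the segmentation R used for estimation is an oversegmentation of the true segmentation R° with every region of R nonempty, with Assumptions 1 and 2 in force. For each n and each admissible pair (ν_d, ν_u), let μ̂_n(ν_d, ν_u) ∈ Θ(R) be a maximizer of μ ↦ Σ_{t=⌊n·ν_d⌋+1}^{⌊n·ν_u⌋} l((R,μ); X_t) over Θ(R). Then almost surely, for every pixel i ∈ P and band w, sup over all admissible pairs (ν_d, ν_u) of | μ̂_n(ν_d,ν_u)(R(i),w) − μ°(R°(i),w) | → 0 as n → ∞. -/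

import Mathlib

open MeasureTheory ProbabilityTheory Filter Topology

/-- The reduced Poisson log-likelihood of a count array `x` under segmentation `R`
and rates `μ`: `l((R,μ); x) = Σ_w Σ_i (x(i,w)·log μ(R i, w) − μ(R i, w))`. -/
noncomputable def loglik {NI NW m : ℕ} (R : Fin NI → Fin m)
    (μ : Fin m × Fin NW → ℝ) (x : Fin NI × Fin NW → ℕ) : ℝ :=
  ∑ w : Fin NW, ∑ i : Fin NI, ((x (i, w) : ℝ) * Real.log (μ (R i, w)) - μ (R i, w))

/-- Gradient of `l((R,μ); x)` in `μ`: its `(h,w)` entry is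
`Σ_{i : R i = h} (x(i,w)/μ(h,w) − 1)`. -/
noncomputable def loglikGrad {NI NW m : ℕ} (R : Fin NI → Fin m)
    (μ : Fin m × Fin NW → ℝ) (x : Fin NI × Fin NW → ℕ) :
    Fin m × Fin NW → ℝ :=
  fun hw => ∑ i : Fin NI,
    if R i = hw.1 then ((x (i, hw.2) : ℝ) / μ hw - 1) else 0

/-- Diagonal of the Hessian of `l((R,μ); x)` in `μ`: its `(h,w)` entry is
`−Σ_{i : R i = h} x(i,w)/μ(h,w)²`. -/
noncomputable def loglikHess {NI NW m : ℕ} (R : Fin NI → Fin m)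
    (μ : Fin m × Fin NW → ℝ) (x : Fin NI × Fin NW → ℕ) :
    Fin m × Fin NW → ℝ :=
  fun hw => -∑ i : Fin NI,
    if R i = hw.1 then (x (i, hw.2) : ℝ) / (μ hw) ^ 2 else 0

/-- The expected log-likelihood `L(R,μ)` when the true per-pixel rates are
`λ°(i,w) = μ°(R° i, w)`. -/
noncomputable def expLoglik {NI NW m0 m : ℕ} (R0 : Fin NI → Fin m0)
    (μ0 : Fin m0 × Fin NW → ℝ) (R : Fin NI → Fin m) (μ : Fin m × Fin NW → ℝ) : ℝ :=
  ∑ w : Fin NW, ∑ i : Fin NI, (μ0 (R0 i, w) * Real.log (μ (R i, w)) - μ (R i, w))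

/-- Gradient of `L(R,μ)` in `μ`. -/
noncomputable def expLoglikGrad {NI NW m0 m : ℕ} (R0 : Fin NI → Fin m0)
    (μ0 : Fin m0 × Fin NW → ℝ) (R : Fin NI → Fin m) (μ : Fin m × Fin NW → ℝ) :
    Fin m × Fin NW → ℝ :=
  fun hw => ∑ i : Fin NI,
    if R i = hw.1 then (μ0 (R0 i, hw.2) / μ hw - 1) else 0

/-- Diagonal of the Hessian of `L(R,μ)` in `μ`. -/
noncomputable def expLoglikHess {NI NW m0 m : ℕ} (R0 : Fin NI → Fin m0)
    (μ0 : Fin m0 × Fin NW → ℝ) (R : Fin NI → Fin m) (μ : Fin m × Fin NW → ℝ) :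
    Fin m × Fin NW → ℝ :=
  fun hw => -∑ i : Fin NI,
    if R i = hw.1 then μ0 (R0 i, hw.2) / (μ hw) ^ 2 else 0

/-- The compact parameter box `Θ(R) = [C_d, C_u]^(Fin m × Fin N_W)`. -/
def Theta (Cd Cu : ℝ) (m NW : ℕ) : Set (Fin m × Fin NW → ℝ) :=
  {μ | ∀ p, μ p ∈ Set.Icc Cd Cu}

/-- An admissible pair of normalized endpoints: `0 ≤ ν_d < ν_u ≤ 1` with
`ν_u − ν_d > ε_ν`. -/
def AdmPair (epsnu : ℝ) : Type :=
  {q : ℝ × ℝ // 0 ≤ q.1 ∧ q.1 < q.2 ∧ q.2 ≤ 1 ∧ epsnu < q.2 - q.1}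

/-- `Rb` is an oversegmentation of `Rs`. -/
def Overseg {P : Type*} {m1 m2 : ℕ} (Rb : P → Fin m1) (Rs : P → Fin m2) : Prop :=
  ∀ i j, Rb i = Rb j → Rs i = Rs j

/-- Regions `p` and `q` of the segmentation `R` are neighbouring: some graph edge
joins a pixel of `R⁻¹(p)` to a pixel of `R⁻¹(q)`. -/
def Neighbouring {NI m : ℕ} (G : SimpleGraph (Fin NI)) (R : Fin NI → Fin m)
    (p q : Fin m) : Prop :=
  ∃ i j, G.Adj i j ∧ R i = p ∧ R j = q

/-!
The log-likelihood separates over the coordinates `c = (h, w)` of `μ`: in coordinate `c` the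
partial-sum objective is `S log u - N T u`, where `S` is the total count of region `h` in band `w`
over the window, `N` the size of region `h` and `T` the length of the window. A maximizer over
`[C_d, C_u]` lies between the two clamps of `S / (N T)`, hence is at most as far from any point of
`[C_d, C_u]` as `S / (N T)` is. Since `R` refines `R°`, all pixels of region `h` share the rate
`μ°(R° i, w)`, so by the strong law applied pixelwise the cumulative region count grows like
`N μ°(R° i, w) k`. Windows of length at least `ε_ν n / 2` inherit this uniformly, which gives the
uniform convergence over admissible pairs.
-/

open Finset Real
open scoped NNReal Nat

lemma tangent_le_mul_log_sub_mul {S c u v : ℝ} (hS : 0 ≤ S) (hu : 0 < u) (hv : 0 < v) :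
    (S / u - c) * (u - v) ≤ (S * log u - c * u) - (S * log v - c * v) := by
  have hlog : 1 - v / u ≤ log u - log v := by
    simpa [Real.log_div hu.ne' hv.ne', inv_div] using Real.one_sub_inv_le_log_of_pos (div_pos hu hv)
  have key : S / u * (u - v) = S * (1 - v / u) := by field_simp
  nlinarith [mul_le_mul_of_nonneg_left hlog hS]

lemma min_le_and_le_max_of_isMaxOn_log {S c a b v : ℝ} (hS : 0 ≤ S) (hc : 0 < c) (ha : 0 < a)
    (hv : v ∈ Set.Icc a b) (hmax : IsMaxOn (fun u => S * log u - c * u) (Set.Icc a b) v) :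
    min b (S / c) ≤ v ∧ v ≤ max a (S / c) := by
  have hv0 : 0 < v := ha.trans_le hv.1
  -- a competitor halfway between `v` and the bracket point would do strictly better
  have better : ∀ u ∈ Set.Icc a b, 0 < (S / u - c) * (u - v) → False := fun u hu hpos =>
    absurd ((tangent_le_mul_log_sub_mul hS (ha.trans_le hu.1) hv0).trans (sub_nonpos.2 (hmax hu)))
      (not_le.2 hpos)
  constructor
  · by_contra! hlt
    set u := (v + min b (S / c)) / 2
    have hvu : v < u := by simp only [u]; linarith
    have huρ : u < S / c := by simp only [u]; linarith [min_le_right b (S / c)]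
    refine better u ⟨by linarith [hv.1], by simp only [u]; linarith [min_le_left b (S / c)]⟩ ?_
    have : c * u < S := by rw [lt_div_iff₀ hc] at huρ; linarith
    have : 0 < S / u - c := by
      rw [sub_pos, lt_div_iff₀ (hv0.trans hvu)]; linarith
    exact mul_pos this (by linarith)
  · by_contra! hlt
    set u := (v + max a (S / c)) / 2
    have huv : u < v := by simp only [u]; linarith
    have hρu : S / c < u := by simp only [u]; linarith [le_max_right a (S / c)]
    have hau : a < u := by simp only [u]; linarith [le_max_left a (S / c)]
    refine better u ⟨hau.le, by linarith [hv.2]⟩ ?_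
    have : S < c * u := by rw [div_lt_iff₀ hc] at hρu; linarith
    have : S / u - c < 0 := by
      rw [sub_neg, div_lt_iff₀ (ha.trans hau)]; linarith
    exact mul_pos_of_neg_of_neg this (by linarith)

lemma abs_sub_le_of_min_le_of_le_max {a b ρ v x : ℝ} (hx : x ∈ Set.Icc a b)
    (hlo : min b ρ ≤ v) (hhi : v ≤ max a ρ) : |v - x| ≤ |ρ - x| := by
  rw [min_le_iff] at hlo
  rw [le_max_iff] at hhi
  rcases le_total x v with hxv | hvx
  · rcases hhi with hva | hvρ
    · simp [show v = x by linarith [hx.1]]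
    · rw [abs_of_nonneg (sub_nonneg.2 hxv), abs_of_nonneg (by linarith)]; linarith
  · rcases hlo with hbv | hρv
    · simp [show v = x by linarith [hx.2]]
    · rw [abs_of_nonpos (sub_nonpos.2 hvx), abs_of_nonpos (by linarith)]; linarith

lemma isMaxOn_apply_of_sum_le {ι β : Type*} [Fintype ι] [DecidableEq ι] {f : ι → β → ℝ}
    {S : ι → Set β} {v : ι → β} (hv : ∀ c, v c ∈ S c)
    (hmax : ∀ μ : ι → β, (∀ c, μ c ∈ S c) → ∑ c, f c (μ c) ≤ ∑ c, f c (v c)) (c : ι) :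
    IsMaxOn (f c) (S c) (v c) := by
  intro u hu
  have hupd : ∀ c', Function.update v c u c' ∈ S c' := by
    intro c'
    rcases eq_or_ne c' c with rfl | hne
    · simpa using hu
    · simpa [Function.update_of_ne hne] using hv c'
  have h := hmax _ hupd
  rw [← add_sum_erase _ _ (mem_univ c), ← add_sum_erase _ _ (mem_univ c),
    sum_congr rfl fun c' hc' => by rw [Function.update_of_ne (ne_of_mem_erase hc')],
    Function.update_self] at h
  exact le_of_add_le_add_right h

lemma exists_abs_sub_natCast_mul_le {U : ℕ → ℝ} {L η : ℝ}
    (hU : Tendsto (fun k : ℕ => U k / k) atTop (𝓝 L)) (hη : 0 < η) :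
    ∃ M, ∀ k : ℕ, |U k - k * L| ≤ η * k + M := by
  obtain ⟨K, hK⟩ := eventually_atTop.1
    ((hU.eventually (Metric.closedBall_mem_nhds L hη)).and (eventually_ge_atTop 1))
  refine ⟨∑ k ∈ range K, |U k - k * L|, fun k => ?_⟩
  rcases lt_or_ge k K with hk | hk
  · have := single_le_sum (f := fun k => |U k - k * L|) (fun _ _ => abs_nonneg _)
      (mem_range.2 hk)
    have : 0 ≤ η * k := by positivity
    linarith
  · obtain ⟨hclose, hk1⟩ := hK k hk
    have hk0 : (0 : ℝ) < k := by exact_mod_cast hk1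
    have hrw : |U k - k * L| = k * |U k / k - L| := by
      rw [← abs_of_pos hk0, ← abs_mul, abs_of_pos hk0, mul_sub, mul_div_cancel₀ _ hk0.ne']
    rw [hrw, mul_comm η]
    rw [dist_eq] at hclose
    have : 0 ≤ ∑ k ∈ range K, |U k - k * L| := sum_nonneg fun _ _ => abs_nonneg _
    nlinarith

lemma eventually_forall_abs_div_sub_le {U : ℕ → ℝ} {L δ ε : ℝ}
    (hU : Tendsto (fun k : ℕ => U k / k) atTop (𝓝 L)) (hδ : 0 < δ) (hε : 0 < ε) :
    ∀ᶠ n : ℕ in atTop, ∀ a b : ℕ, b ≤ n → δ * n ≤ (b : ℝ) - a →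
      |(U b - U a) / ((b : ℝ) - a) - L| ≤ ε := by
  obtain ⟨M, hM⟩ := exists_abs_sub_natCast_mul_le hU (by positivity : 0 < ε * δ / 4)
  have hM0 : 0 ≤ M := by simpa using (abs_nonneg _).trans (hM 0)
  filter_upwards [eventually_ge_atTop 1,
    tendsto_natCast_atTop_atTop.eventually_ge_atTop (4 * M / (ε * δ))] with n hn1 hnM a b hbn hab
  have hn : (0 : ℝ) < n := by exact_mod_cast hn1
  have hbn' : (b : ℝ) ≤ n := by exact_mod_cast hbn
  have hT : 0 < (b : ℝ) - a := (mul_pos hδ hn).trans_le hab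
  have hMn : 4 * M ≤ ε * δ * n := by rw [div_le_iff₀ (by positivity)] at hnM; linarith
  rw [div_sub' hT.ne', abs_div, abs_of_pos hT, div_le_iff₀ hT]
  calc |U b - U a - ((b : ℝ) - a) * L| = |(U b - b * L) - (U a - a * L)| := by ring_nf
    _ ≤ |U b - b * L| + |U a - a * L| := abs_sub _ _
    _ ≤ (ε * δ / 4 * b + M) + (ε * δ / 4 * a + M) := add_le_add (hM b) (hM a)
    _ ≤ ε * (δ * n) := by nlinarith [mul_pos hε hδ]
    _ ≤ ε * ((b : ℝ) - a) := by gcongr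

lemma tendsto_iSup_abs_of_forall_eventually_le {ι : Sort*} {f : ℕ → ι → ℝ}
    (h : ∀ ε > 0, ∀ᶠ n in atTop, ∀ q, |f n q| ≤ ε) :
    Tendsto (fun n => ⨆ q, |f n q|) atTop (𝓝 0) :=
  tendsto_order.2
    ⟨fun _ ha => Eventually.of_forall fun _ => ha.trans_le (Real.iSup_nonneg fun _ => abs_nonneg _),
      fun _ ha => (h _ (half_pos ha)).mono fun _ hn =>
        (Real.iSup_le hn (half_pos ha).le).trans_lt (half_lt_self ha)⟩

lemma AdmPair.floor_window {ε : ℝ} (q : AdmPair ε) {n : ℕ} (hn : 2 ≤ n * ε) :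
    ⌊(n : ℝ) * q.1.2⌋₊ ≤ n ∧ ⌊(n : ℝ) * q.1.1⌋₊ < ⌊(n : ℝ) * q.1.2⌋₊ ∧
      ε / 2 * n ≤ (⌊(n : ℝ) * q.1.2⌋₊ : ℝ) - ⌊(n : ℝ) * q.1.1⌋₊ := by
  obtain ⟨hd, -, hu, hgap⟩ := q.2
  have hn0 : (0 : ℝ) ≤ n := n.cast_nonneg
  have hfd := Nat.floor_le (mul_nonneg hn0 hd)
  have hfu := Nat.sub_one_lt_floor ((n : ℝ) * q.1.2)
  have hwidth : ε / 2 * n ≤ (⌊(n : ℝ) * q.1.2⌋₊ : ℝ) - ⌊(n : ℝ) * q.1.1⌋₊ := by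
    nlinarith [mul_le_mul_of_nonneg_left hgap.le hn0]
  refine ⟨Nat.floor_le_of_le (mul_le_of_le_one_right hn0 hu), ?_, hwidth⟩
  exact_mod_cast (by linarith : (⌊(n : ℝ) * q.1.1⌋₊ : ℝ) < ⌊(n : ℝ) * q.1.2⌋₊)

lemma hasSum_mul_natCast_poissonMeasure (r : ℝ≥0) :
    HasSum (fun n : ℕ => exp (-r) * r ^ n / n ! * n) r := by
  have hshift (n : ℕ) :
      exp (-r) * r ^ (n + 1) / (n + 1)! * ((n + 1 : ℕ) : ℝ) = r * (exp (-r) * r ^ n / n !) := by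
    rw [Nat.factorial_succ]
    push_cast
    field_simp
    ring
  refine (hasSum_nat_add_iff' 1).1 ?_
  simpa only [range_one, sum_singleton, Nat.cast_zero, mul_zero, sub_zero, hshift, mul_one]
    using (hasSum_one_poissonMeasure r).mul_left (r : ℝ)

lemma integrable_natCast_poissonMeasure (r : ℝ≥0) :
    Integrable (fun n : ℕ => (n : ℝ)) (poissonMeasure r) :=
  integrable_poissonMeasure_iff.2 (by simpa using (hasSum_mul_natCast_poissonMeasure r).summable)

lemma integral_natCast_poissonMeasure (r : ℝ≥0) : ∫ n, (n : ℝ) ∂poissonMeasure r = r := by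
  rw [integral_poissonMeasure]
  simpa using (hasSum_mul_natCast_poissonMeasure r).tsum_eq

lemma ae_tendsto_average_of_iIndepFun {Ω κ : Type*} [MeasurableSpace Ω] [Countable κ]
    {P : Measure Ω} {X : ℕ → Ω → κ → ℕ} (hmeas : ∀ t p, Measurable fun ω => X t ω p)
    (hindep : iIndepFun (β := fun _ : ℕ × κ => ℕ) (fun q ω => X q.1 ω q.2) P)
    {ν : κ → Measure ℕ} (hlaw : ∀ t p, P.map (fun ω => X t ω p) = ν p)
    (hint : ∀ p, Integrable (fun n : ℕ => (n : ℝ)) (ν p)) :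
    ∀ᵐ ω ∂P, ∀ p, Tendsto (fun n : ℕ => (∑ t ∈ range n, (X (t + 1) ω p : ℝ)) / n) atTop
      (𝓝 (∫ k, (k : ℝ) ∂ν p)) := by
  rw [ae_all_iff]
  intro p
  have hlawY : HasLaw (fun ω => X 1 ω p) (ν p) P := ⟨(hmeas 1 p).aemeasurable, hlaw 1 p⟩
  have hident : ∀ t, IdentDistrib (fun ω => X t ω p) (fun ω => X 1 ω p) P P := fun t =>
    ⟨(hmeas t p).aemeasurable, (hmeas 1 p).aemeasurable, by rw [hlaw, hlaw]⟩
  have hslln := strong_law_ae_real (fun t ω => (X (t + 1) ω p : ℝ))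
    ((integrable_map_measure measurable_from_top.aestronglyMeasurable (hmeas 1 p).aemeasurable).1
      (hlaw 1 p ▸ hint p))
    (fun t s hts => (hindep.indepFun (i := (t + 1, p)) (j := (s + 1, p)) (by simpa using hts)).comp
      measurable_from_top measurable_from_top)
    (fun t => (hident (t + 1)).comp measurable_from_top)
  convert hslln using 4
  exact (hlawY.integral_comp measurable_from_top.aestronglyMeasurable).symm

section Segmentation

variable {NI NW m : ℕ}

def regionCount (R : Fin NI → Fin m) (x : Fin NI × Fin NW → ℕ) (c : Fin m × Fin NW) : ℝ :=
  ∑ i with R i = c.1, (x (i, c.2) : ℝ)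

def regionSize (R : Fin NI → Fin m) (h : Fin m) : ℝ :=
  #{i | R i = h}

lemma loglik_eq_sum_regionCount (R : Fin NI → Fin m) (μ : Fin m × Fin NW → ℝ)
    (x : Fin NI × Fin NW → ℕ) :
    loglik R μ x = ∑ c, (regionCount R x c * log (μ c) - regionSize R c.1 * μ c) := by
  have hfiber : ∀ h w, regionCount R x (h, w) * log (μ (h, w)) - regionSize R h * μ (h, w) =
      ∑ i with R i = h, ((x (i, w) : ℝ) * log (μ (R i, w)) - μ (R i, w)) := by
    intro h w
    rw [regionCount, regionSize, sum_mul, card_eq_sum_ones, Nat.cast_sum, sum_mul,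
      ← sum_sub_distrib]
    exact sum_congr rfl fun i hi => by rw [(mem_filter.1 hi).2]; simp
  simp only [Fintype.sum_prod_type, hfiber]
  rw [sum_comm]
  simp only [sum_fiberwise, loglik]

lemma sum_loglik_eq_sum_regionCount (R : Fin NI → Fin m) (μ : Fin m × Fin NW → ℝ)
    (x : ℕ → Fin NI × Fin NW → ℕ) (s : Finset ℕ) :
    ∑ t ∈ s, loglik R μ (x t) =
      ∑ c, ((∑ t ∈ s, regionCount R (x t) c) * log (μ c) - (#s * regionSize R c.1) * μ c) := by
  simp only [loglik_eq_sum_regionCount]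
  rw [sum_comm]
  simp only [sum_sub_distrib, sum_mul, sum_const, nsmul_eq_mul, mul_assoc]

lemma regionCount_nonneg (R : Fin NI → Fin m) (x : Fin NI × Fin NW → ℕ) (c : Fin m × Fin NW) :
    0 ≤ regionCount R x c :=
  sum_nonneg fun _ _ => Nat.cast_nonneg _

lemma regionSize_pos (R : Fin NI → Fin m) (i : Fin NI) : 0 < regionSize R (R i) := by
  unfold regionSize
  exact_mod_cast card_pos.2 ⟨i, by simp⟩

lemma abs_sub_le_of_maximizes_sum_loglik {Cd Cu : ℝ} (hCd : 0 < Cd) (R : Fin NI → Fin m)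
    (x : ℕ → Fin NI × Fin NW → ℕ) {s : Finset ℕ} (hs : s.Nonempty) {v : Fin m × Fin NW → ℝ}
    (hv : v ∈ Theta Cd Cu m NW)
    (hmax : ∀ μ ∈ Theta Cd Cu m NW, ∑ t ∈ s, loglik R μ (x t) ≤ ∑ t ∈ s, loglik R v (x t))
    {c : Fin m × Fin NW} (hc : 0 < regionSize R c.1) {y : ℝ} (hy : y ∈ Set.Icc Cd Cu) :
    |v c - y| ≤ |(∑ t ∈ s, regionCount R (x t) c) / (#s * regionSize R c.1) - y| := by
  simp only [sum_loglik_eq_sum_regionCount] at hmax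
  have hcoord := isMaxOn_apply_of_sum_le
    (f := fun c u => (∑ t ∈ s, regionCount R (x t) c) * log u - (#s * regionSize R c.1) * u)
    hv hmax c
  obtain ⟨hlo, hhi⟩ := min_le_and_le_max_of_isMaxOn_log
    (sum_nonneg fun t _ => regionCount_nonneg R (x t) c)
    (mul_pos (by exact_mod_cast hs.card_pos) hc) hCd (hv c) hcoord
  exact abs_sub_le_of_min_le_of_le_max hy hlo hhi

lemma abs_sub_le_of_maximizes_window_loglik {Cd Cu : ℝ} (hCd : 0 < Cd) (R : Fin NI → Fin m)
    (x : ℕ → Fin NI × Fin NW → ℕ) {a b : ℕ} (hab : a < b) {v : Fin m × Fin NW → ℝ}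
    (hv : v ∈ Theta Cd Cu m NW)
    (hmax : ∀ μ ∈ Theta Cd Cu m NW,
      ∑ t ∈ Ioc a b, loglik R μ (x t) ≤ ∑ t ∈ Ioc a b, loglik R v (x t))
    {c : Fin m × Fin NW} (hc : 0 < regionSize R c.1) {y : ℝ} (hy : y ∈ Set.Icc Cd Cu) :
    |v c - y| ≤ |(∑ t ∈ range b, regionCount R (x (t + 1)) c
        - ∑ t ∈ range a, regionCount R (x (t + 1)) c) / ((b : ℝ) - a)
          - regionSize R c.1 * y| / regionSize R c.1 := by
  have hsum : ∑ t ∈ Ioc a b, regionCount R (x t) c = ∑ t ∈ range b, regionCount R (x (t + 1)) c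
      - ∑ t ∈ range a, regionCount R (x (t + 1)) c := by
    rw [← sum_Ico_eq_sub _ hab.le, sum_Ico_add' (fun t => regionCount R (x t) c),
      Ico_add_one_add_one_eq_Ioc]
  have hT : (0 : ℝ) < b - a := sub_pos.2 (by exact_mod_cast hab)
  convert abs_sub_le_of_maximizes_sum_loglik hCd R x (nonempty_Ioc.2 hab) hv hmax hc hy using 1
  rw [← hsum, Nat.card_Ioc, Nat.cast_sub hab.le, ← abs_of_pos hc, ← abs_div, abs_of_pos hc]
  congr 1
  field_simp

lemma tendsto_sum_regionCount_div (R : Fin NI → Fin m)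
    {x : ℕ → Fin NI × Fin NW → ℕ} {rate : Fin NI × Fin NW → ℝ}
    (hx : ∀ p, Tendsto (fun n : ℕ => (∑ t ∈ range n, (x (t + 1) p : ℝ)) / n) atTop (𝓝 (rate p)))
    (i : Fin NI) (w : Fin NW) (hrate : ∀ j, R j = R i → rate (j, w) = rate (i, w)) :
    Tendsto (fun n : ℕ => (∑ t ∈ range n, regionCount R (x (t + 1)) (R i, w)) / n) atTop
      (𝓝 (regionSize R (R i) * rate (i, w))) := by
  have hlim : regionSize R (R i) * rate (i, w) = ∑ j with R j = R i, rate (j, w) := by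
    rw [regionSize, ← nsmul_eq_mul, ← sum_const]
    exact sum_congr rfl fun j hj => (hrate j (mem_filter.1 hj).2).symm
  rw [hlim]
  refine (tendsto_finsetSum _ fun j _ => hx (j, w)).congr fun n => ?_
  rw [← sum_div, sum_comm]
  rfl

end Segmentation

theorem lemma2_prop_6_3_general
    {NI NW m0 m : ℕ}
    (Cd Cu : ℝ) (hCd : 0 < Cd)
    (epsnu : ℝ) (hepsnu : 0 < epsnu ∧ epsnu < 1)
    (R0 : Fin NI → Fin m0)
    (μ0 : Fin m0 × Fin NW → ℝ)
    -- Assumption 1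
    (hA1 : ∀ p, μ0 p ∈ Set.Icc Cd Cu)
    -- the segmentation used for estimation: an oversegmentation of R° with
    -- nonempty regions
    (R : Fin NI → Fin m) (hR : Overseg R R0)
    {Ω : Type*} [MeasurableSpace Ω] (Pr : Measure Ω)
    (X : ℕ → Ω → Fin NI × Fin NW → ℕ)
    (hmeas : ∀ t p, Measurable fun ω => X t ω p)
    (hindep : iIndepFun (β := fun _ : ℕ × (Fin NI × Fin NW) => ℕ)
      (fun q ω => X q.1 ω q.2) Pr)
    (hlaw : ∀ t p, Measure.map (fun ω => X t ω p) Pr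
      = poissonMeasure (μ0 (R0 p.1, p.2)).toNNReal)
    -- the (random) maximizer of the partial-sum log-likelihood over Θ(R)
    (μhat : ℕ → AdmPair epsnu → Ω → (Fin m × Fin NW → ℝ))
    (hμhat_mem : ∀ n q ω, μhat n q ω ∈ Theta Cd Cu m NW)
    (hμhat_max : ∀ (n : ℕ) (q : AdmPair epsnu) (ω : Ω),
      ∀ μ ∈ Theta Cd Cu m NW,
        ∑ t ∈ Finset.Ioc ⌊(n : ℝ) * q.1.1⌋₊ ⌊(n : ℝ) * q.1.2⌋₊, loglik R μ (X t ω)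
          ≤ ∑ t ∈ Finset.Ioc ⌊(n : ℝ) * q.1.1⌋₊ ⌊(n : ℝ) * q.1.2⌋₊,
              loglik R (μhat n q ω) (X t ω)) :
    ∀ᵐ ω ∂Pr, ∀ (i : Fin NI) (w : Fin NW),
      Tendsto (fun n : ℕ => ⨆ q : AdmPair epsnu,
        |μhat n q ω (R i, w) - μ0 (R0 i, w)|) atTop (𝓝 0) := by
  have hrate (p : Fin NI × Fin NW) : ((μ0 (R0 p.1, p.2)).toNNReal : ℝ) = μ0 (R0 p.1, p.2) :=
    Real.coe_toNNReal _ (hCd.le.trans (hA1 _).1)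
  filter_upwards [ae_tendsto_average_of_iIndepFun hmeas hindep hlaw
    fun _ => integrable_natCast_poissonMeasure _] with ω hω i w
  simp only [integral_natCast_poissonMeasure, hrate] at hω
  have hN := regionSize_pos R i
  have hU := tendsto_sum_regionCount_div R (x := fun t => X t ω)
    (rate := fun p => μ0 (R0 p.1, p.2)) hω i w
    fun j hj => by rw [hR j i hj]
  refine tendsto_iSup_abs_of_forall_eventually_le fun ε hε => ?_
  filter_upwards [eventually_forall_abs_div_sub_le hU (half_pos hepsnu.1) (mul_pos hε hN),
    tendsto_natCast_atTop_atTop.eventually_ge_atTop (2 / epsnu)] with n hwin hn q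
  obtain ⟨hbn, hab, hgap⟩ := q.floor_window ((div_le_iff₀ hepsnu.1).1 hn)
  exact (abs_sub_le_of_maximizes_window_loglik hCd R (fun t => X t ω) hab (hμhat_mem n q ω)
    (hμhat_max n q ω) hN (hA1 _)).trans ((div_le_iff₀ hN).2 (hwin _ _ hbn hgap))

/-- Lemma 2, part (prop_6.3): when an oversegmentation `R` of the true
segmentation `R°` is used for estimation, the maximizer `μ̂_n(ν_d,ν_u)` of the
partial-sum log-likelihood over `Θ(R)` recovers the true per-pixel rates: almost
surely, for every pixel `i` and band `w`,
`sup_{(ν_d,ν_u)} |μ̂_n(ν_d,ν_u)(R i, w) − μ°(R° i, w)| → 0`. -/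
theorem lemma2_prop_6_3
    {NI NW m0 m : ℕ} (G : SimpleGraph (Fin NI))
    (Cd Cu : ℝ) (hCd : 0 < Cd) (hCdCu : Cd ≤ Cu)
    (epsnu : ℝ) (hepsnu : 0 < epsnu ∧ epsnu < 1)
    (R0 : Fin NI → Fin m0) (hR0surj : ∀ h, ∃ i, R0 i = h)
    (μ0 : Fin m0 × Fin NW → ℝ)
    -- Assumption 1
    (hA1 : ∀ p, μ0 p ∈ Set.Icc Cd Cu)
    -- Assumption 2
    (hA2 : ∀ p q, p ≠ q → Neighbouring G R0 p q → ∀ w, μ0 (p, w) ≠ μ0 (q, w))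
    -- the segmentation used for estimation: an oversegmentation of R° with
    -- nonempty regions
    (R : Fin NI → Fin m) (hRsurj : ∀ h, ∃ i, R i = h) (hR : Overseg R R0)
    {Ω : Type*} [MeasurableSpace Ω] (Pr : Measure Ω) [IsProbabilityMeasure Pr]
    (X : ℕ → Ω → Fin NI × Fin NW → ℕ)
    (hmeas : ∀ t p, Measurable fun ω => X t ω p)
    (hindep : iIndepFun (β := fun _ : ℕ × (Fin NI × Fin NW) => ℕ)
      (fun q ω => X q.1 ω q.2) Pr)
    (hlaw : ∀ t p, Measure.map (fun ω => X t ω p) Pr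
      = poissonMeasure (μ0 (R0 p.1, p.2)).toNNReal)
    -- the (random) maximizer of the partial-sum log-likelihood over Θ(R)
    (μhat : ℕ → AdmPair epsnu → Ω → (Fin m × Fin NW → ℝ))
    (hμhat_mem : ∀ n q ω, μhat n q ω ∈ Theta Cd Cu m NW)
    (hμhat_max : ∀ (n : ℕ) (q : AdmPair epsnu) (ω : Ω),
      ∀ μ ∈ Theta Cd Cu m NW,
        ∑ t ∈ Finset.Ioc ⌊(n : ℝ) * q.1.1⌋₊ ⌊(n : ℝ) * q.1.2⌋₊, loglik R μ (X t ω)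
          ≤ ∑ t ∈ Finset.Ioc ⌊(n : ℝ) * q.1.1⌋₊ ⌊(n : ℝ) * q.1.2⌋₊,
              loglik R (μhat n q ω) (X t ω)) :
    ∀ᵐ ω ∂Pr, ∀ (i : Fin NI) (w : Fin NW),
      Tendsto (fun n : ℕ => ⨆ q : AdmPair epsnu,
        |μhat n q ω (R i, w) - μ0 (R0 i, w)|) atTop (𝓝 0) :=
  lemma2_prop_6_3_general Cd Cu hCd epsnu hepsnu R0 μ0 hA1 R hR Pr X hmeas hindep hlaw μhat
    hμhat_mem hμhat_max
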